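/- arXiv:0708.2475 — 2 statements merged into one kernel-verified Lean document; each statement's English description precedes it below -/
import Mathlib

section
/- Let C be a small category with pullbacks and let M : Cᵒᵖ ⥤ Grpd be a presheaf of groupoids. Then the Grothendieck construction C/M has pullbacks, and they are computed as follows: given morphisms (g,α) : (Y,b) → (X,a) and (h,β) : (Z,c) → (X,a) in C/M, the object (Y ×_X Z, M(g∘p_Y)(a)) (where p_Y, p_Z are the projections of the pullback Y ×_X Z in C) together with the projections (p_Y, M(p_Y)(α)) and (p_Z, M(p_Z)(β)) is a pullback of (g,α) and (h,β) in C/M. In particular the forgetful functor C/M → C preserves pullbacks. -/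
/-!
STATEMENT 0: For a small category `C` with pullbacks and a presheaf of
groupoids `M : Cᵒᵖ ⥤ Grpd`, the Grothendieck construction `C/M` has pullbacks,
computed by the explicit formula: the pullback of `(g,α) : (Y,b) → (X,a)` and
`(h,β) : (Z,c) → (X,a)` is `(Y ×_X Z, M(p_Y ≫ g)(a))` with projections
`(p_Y, M(p_Y)(α))` and `(p_Z, M(p_Z)(β))`; and the forgetful functor
`C/M ⥤ C` preserves pullbacks.

We realize `C/M` (objects: pairs `(X, a)` with `a ∈ M(X)`; morphisms
`(Y,b) → (X,a)`: pairs `(u : Y ⟶ X, α : b ≅ M(u)(a))`) as the opposite of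
Mathlib's Grothendieck construction of `M ⋙ Grpd.forgetToCat` over `Cᵒᵖ`;
since the fibers are groupoids this encodes exactly the same category (the
fiber component of a morphism is recorded as the inverse isomorphism
`M(u)(a) ⟶ b`).
-/

open CategoryTheory Opposite Limits

universe u

namespace Hollander

variable {C : Type u} [SmallCategory C]

/-- The Grothendieck construction of a presheaf of groupoids, as a covariant
Grothendieck construction over `Cᵒᵖ`. -/
abbrev CMG (M : Cᵒᵖ ⥤ Grpd.{u, u}) := Grothendieck (M ⋙ Grpd.forgetToCat)

/-- The category `C/M` associated to a presheaf of groupoids `M` on `C`. -/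
abbrev CM (M : Cᵒᵖ ⥤ Grpd.{u, u}) := (CMG M)ᵒᵖ

variable (M : Cᵒᵖ ⥤ Grpd.{u, u})

/-- The object `(X, a)` of `C/M`. -/
def CMobj (X : C) (a : M.obj (op X)) : CM M := op ⟨op X, a⟩

/-- The morphism `(Y, b) ⟶ (X, a)` of `C/M` determined by `u : Y ⟶ X` and the
isomorphism `α : M(u)(a) ⟶ b` (every morphism of the groupoid `M(Y)` is an
isomorphism). -/
def CMhom {X Y : C} {a : M.obj (op X)} {b : M.obj (op Y)}
    (u : Y ⟶ X) (α : (M.map u.op).obj a ⟶ b) :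
    CMobj M Y b ⟶ CMobj M X a :=
  Quiver.Hom.op (show (⟨op X, a⟩ : CMG M) ⟶ ⟨op Y, b⟩ from ⟨u.op, α⟩)

/-- The forgetful functor `C/M ⥤ C`, `(X, a) ↦ X`. -/
def CMforget : CM M ⥤ C := (Grothendieck.forget (M ⋙ Grpd.forgetToCat)).op ⋙ unopUnop C

end Hollander

/-!
A morphism of a Grothendieck construction whose fiber component is invertible is cocartesian
over the base: maps out of its target over a base map `d` correspond to maps out of its source
over `k.base ≫ d` (`descOfIsIsoFiber`). Hence a commutative square lying over a pushout of the base is a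
pushout as soon as one leg out of the source corner and the opposite leg into the target corner
are cocartesian. Since `M` takes values in groupoids, every morphism of `C/M` has invertible fiber
component, so the square of `C/M` over a pullback square of `C` is a pullback, and the forgetful
functor sends it to that pullback square.
-/

namespace CategoryTheory.Grothendieck

variable {Γ : Type*} [Category Γ] {F : Γ ⥤ Cat}

section

variable {A B V : Grothendieck F} (k : A ⟶ B) [IsIso k.fiber]

theorem hom_ext_of_isIso_fiber {t t' : B ⟶ V} (hbase : t.base = t'.base)
    (hcomp : k ≫ t = k ≫ t') : t = t' := by
  obtain ⟨tb, tf⟩ := t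
  obtain ⟨tb', tf'⟩ := t'
  dsimp only at hbase
  subst hbase
  have hf := Grothendieck.congr hcomp
  simp only [comp_fiber, eqToHom_trans_assoc] at hf
  refine Grothendieck.ext _ _ rfl ?_
  simpa using (cancel_epi ((F.map tb).toFunctor.map k.fiber)).mp ((cancel_epi (eqToHom _)).mp hf)

noncomputable def descOfIsIsoFiber (ψ : A ⟶ V) (d : B.base ⟶ V.base)
    (hd : k.base ≫ d = ψ.base) : B ⟶ V where
  base := d
  fiber := (F.map d).toFunctor.map (inv k.fiber) ≫ eqToHom (by simp [← hd]) ≫ ψ.fiber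

@[simp]
theorem descOfIsIsoFiber_base (ψ : A ⟶ V) (d : B.base ⟶ V.base) (hd : k.base ≫ d = ψ.base) :
    (descOfIsIsoFiber k ψ d hd).base = d :=
  rfl

@[simp]
theorem comp_descOfIsIsoFiber (ψ : A ⟶ V) (d : B.base ⟶ V.base) (hd : k.base ≫ d = ψ.base) :
    k ≫ descOfIsIsoFiber k ψ d hd = ψ := by
  refine Grothendieck.ext _ _ hd ?_
  simp only [descOfIsIsoFiber, comp_base, comp_fiber, Functor.map_inv, IsIso.hom_inv_id_assoc]
  erw [eqToHom_trans_assoc, eqToHom_trans_assoc, eqToHom_refl, Category.id_comp]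

end

theorem isPushout_of_isPushout_base {A B D P : Grothendieck F} {f : A ⟶ B} {k : A ⟶ D}
    {l : B ⟶ P} {m : D ⟶ P} [IsIso k.fiber] [IsIso l.fiber] (w : f ≫ l = k ≫ m)
    (hbase : IsPushout f.base k.base l.base m.base) : IsPushout f k l m := by
  refine IsPushout.of_isColimit' ⟨w⟩ (PushoutCocone.IsColimit.mk _
    (fun s => descOfIsIsoFiber l s.inl
      (hbase.desc s.inl.base s.inr.base (by rw [← comp_base, s.condition, comp_base]))
      (hbase.inl_desc _ _ _)) (fun s => comp_descOfIsIsoFiber _ _ _ _) (fun s => ?_)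
    (fun s χ hl hr => hom_ext_of_isIso_fiber l (hbase.hom_ext ?_ ?_) ?_))
  · refine hom_ext_of_isIso_fiber k (by simp) ?_
    rw [← Category.assoc, ← w, Category.assoc, comp_descOfIsIsoFiber, s.condition]
  · simp [← comp_base, hl]
  · simp [← comp_base, hr]
  · rw [hl, comp_descOfIsIsoFiber]

end CategoryTheory.Grothendieck

namespace Hollander

variable {C : Type u} [SmallCategory C] (M : Cᵒᵖ ⥤ Grpd.{u, u})

instance isIso_fiber {P Q : CMG M} (φ : P ⟶ Q) : IsIso φ.fiber :=
  IsGroupoid.all_isIso (C := M.obj Q.base) φ.fiber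

variable [HasPullbacks C] {X Y Z : C} {a : M.obj (op X)} {b : M.obj (op Y)} {c : M.obj (op Z)}

noncomputable def CMpullbackFst (g : Y ⟶ X) (h : Z ⟶ X) (α : (M.map g.op).obj a ⟶ b) :
    CMobj M (pullback g h) ((M.map (pullback.fst g h ≫ g).op).obj a) ⟶ CMobj M Y b :=
  CMhom M (pullback.fst g h)
    (Groupoid.inv ((M.map (pullback.fst g h).op).map α) ≫
      eqToHom (by rw [op_comp, M.map_comp]; rfl))

noncomputable def CMpullbackSnd (g : Y ⟶ X) (h : Z ⟶ X) (β : (M.map h.op).obj a ⟶ c) :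
    CMobj M (pullback g h) ((M.map (pullback.fst g h ≫ g).op).obj a) ⟶ CMobj M Z c :=
  CMhom M (pullback.snd g h)
    (Groupoid.inv ((M.map (pullback.snd g h).op).map β) ≫
      eqToHom (by rw [pullback.condition, op_comp, M.map_comp]; rfl))

theorem CMpullback_condition (g : Y ⟶ X) (h : Z ⟶ X) (α : (M.map g.op).obj a ⟶ b)
    (β : (M.map h.op).obj a ⟶ c) :
    CMpullbackFst M g h α ≫ CMhom M g α = CMpullbackSnd M g h β ≫ CMhom M h β := by
  apply Quiver.Hom.unop_inj
  rw [unop_comp, unop_comp]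
  fapply Grothendieck.ext
  · show g.op ≫ (pullback.fst g h).op = h.op ≫ (pullback.snd g h).op
    rw [← op_comp, ← op_comp, pullback.condition]
  · simp only [CMpullbackFst, CMpullbackSnd, CMhom, Grothendieck.comp_fiber]
    dsimp only [Quiver.Hom.op, Quiver.Hom.unop]
    change _ ≫ _ ≫ (M.map _).map α ≫ _ = _ ≫ (M.map _).map β ≫ _
    erw [Groupoid.inv_eq_inv, Groupoid.inv_eq_inv, IsIso.hom_inv_id_assoc,
      IsIso.hom_inv_id_assoc, eqToHom_trans, eqToHom_trans, eqToHom_trans]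

theorem isPullback_CMpullback (g : Y ⟶ X) (h : Z ⟶ X) (α : (M.map g.op).obj a ⟶ b)
    (β : (M.map h.op).obj a ⟶ c) :
    IsPullback (CMpullbackFst M g h α) (CMpullbackSnd M g h β) (CMhom M g α) (CMhom M h β) :=
  (Grothendieck.isPushout_of_isPushout_base
    (congrArg Quiver.Hom.unop (CMpullback_condition M g h α β)).symm
    (IsPullback.of_hasPullback g h).op).op

theorem hasPullbacks_CM : HasPullbacks (CM M) :=
  have {P Q W : CM M} (f : P ⟶ W) (k : Q ⟶ W) : HasLimit (cospan f k) :=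
    (isPullback_CMpullback M f.unop.base.unop k.unop.base.unop f.unop.fiber
      k.unop.fiber).hasPullback
  hasPullbacks_of_hasLimit_cospan (CM M)

theorem preservesLimit_cospan_CMforget {P Q W : CM M} (f : P ⟶ W) (k : Q ⟶ W) :
    PreservesLimit (cospan f k) (CMforget M) :=
  (isPullback_CMpullback M f.unop.base.unop k.unop.base.unop f.unop.fiber
    k.unop.fiber).preservesLimit_cospan_iff.mpr (IsPullback.of_hasPullback _ _)

theorem preservesPullbacks_CMforget : PreservesLimitsOfShape WalkingCospan (CMforget M) where
  preservesLimit {K} :=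
    have := preservesLimit_cospan_CMforget M (K.map WalkingCospan.Hom.inl)
      (K.map WalkingCospan.Hom.inr)
    preservesLimit_of_iso_diagram _ (diagramIsoCospan K).symm

end Hollander

open Hollander in
/-- Let `C` be a small category with pullbacks and
`M : Cᵒᵖ ⥤ Grpd` a presheaf of groupoids.  Then:
(1) for morphisms `(g,α) : (Y,b) → (X,a)` and `(h,β) : (Z,c) → (X,a)` of `C/M`,
the object `(Y ×_X Z, M(p_Y ≫ g)(a))` together with the projections
`(p_Y, M(p_Y)(α))` and `(p_Z, M(p_Z)(β))` is a pullback of `(g,α)` and `(h,β)`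
in `C/M`;
(2) `C/M` has pullbacks; and
(3) the forgetful functor `C/M ⥤ C` preserves pullbacks. -/
theorem stmt0 {C : Type u} [SmallCategory C] [HasPullbacks C] (M : Cᵒᵖ ⥤ Grpd.{u, u}) :
    (∀ (X Y Z : C) (a : M.obj (op X)) (b : M.obj (op Y)) (c : M.obj (op Z))
      (g : Y ⟶ X) (h : Z ⟶ X)
      (α : (M.map g.op).obj a ⟶ b) (β : (M.map h.op).obj a ⟶ c),
      IsPullback
        (CMhom M (pullback.fst g h)
          (Groupoid.inv ((M.map (pullback.fst g h).op).map α) ≫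
            eqToHom (by rw [op_comp, M.map_comp]; rfl))
          : CMobj M (pullback g h) ((M.map (pullback.fst g h ≫ g).op).obj a) ⟶ CMobj M Y b)
        (CMhom M (pullback.snd g h)
          (Groupoid.inv ((M.map (pullback.snd g h).op).map β) ≫
            eqToHom (by rw [pullback.condition, op_comp, M.map_comp]; rfl))
          : CMobj M (pullback g h) ((M.map (pullback.fst g h ≫ g).op).obj a) ⟶ CMobj M Z c)
        (CMhom M g α) (CMhom M h β)) ∧
    HasPullbacks (CM M) ∧
    Nonempty (PreservesLimitsOfShape WalkingCospan (CMforget M)) :=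
  ⟨fun _ _ _ _ _ _ g h α β => isPullback_CMpullback M g h α β, hasPullbacks_CM M,
    ⟨preservesPullbacks_CMforget M⟩⟩
end

section
/- Let C be a small category with pullbacks equipped with a Grothendieck pretopology, M : Cᵒᵖ ⥤ Grpd a presheaf of groupoids, and equip C/M with the Grothendieck topology generated by the pretopology whose covers are the families forgetting to covers in C. Then the covers of the special form {(u_i, id) : (U_i, M(u_i)(a)) → (X,a)}, for {u_i : U_i → X} a cover in C and a an object of M(X), generate this topology: a presheaf of sets F on C/M is a sheaf for this topology if and only if F satisfies the sheaf condition with respect to every presieve of this special form. -/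
/-!
The forgetful functor `C/M ⥤ C` is fibred in groupoids: since the fibres are groupoids, a
morphism `g` into `(X, a)` factors through any `h` into `(X, a)` as soon as the underlying
morphism of `g` factors through that of `h`. Consequently the sieve generated by any cover `R`
contains the special cover on the underlying family of `R`, and the special covers are stable
under base change up to such factorisations, i.e. they form a coverage. This coverage generates
the topology of `C/M`, and a presheaf is a sheaf for the topology generated by a coverage iff it
satisfies the sheaf condition for the covering families themselves.
-/

open CategoryTheory Opposite Limits

universe u

namespace Hollander

variable {C : Type u} [SmallCategory C]

variable (M : Cᵒᵖ ⥤ Grpd.{u, u})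

/-- The underlying family in `C` of a family of morphisms of `C/M`. -/
def underlyingPresieve {P : CM M} (R : Presieve P) : Presieve ((CMforget M).obj P) :=
  fun U u => ∃ (b : M.obj (op U)) (f : CMobj M U b ⟶ P),
    R f ∧ (CMforget M).map f = u

/-- The Grothendieck topology generated by a collection of covering families:
the smallest Grothendieck topology for which each of the given families
generates a covering sieve. -/
def genTopology {D : Type u} [SmallCategory D] (K : ∀ X : D, Set (Presieve X)) :
    GrothendieckTopology D :=
  sInf {J | ∀ (X : D) (R : Presieve X), R ∈ K X → Sieve.generate R ∈ J X}

/-- The topology on `C/M` generated by the pretopology whose covers are the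
families of morphisms of `C/M` whose underlying families are covers in `C`. -/
def cmTopology [HasPullbacks C] (K : Pretopology C) : GrothendieckTopology (CM M) :=
  genTopology (fun P => {R | underlyingPresieve M R ∈ K.coverings ((CMforget M).obj P)})

/-- The special covering family `{(u, id) : (U, M(u)(a)) → (X, a)}` of `C/M`
associated to a family `{u : U → X}` of morphisms of `C` (a member of the
family for each `u : U ⟶ X` belonging to `S`). -/
def specialPresieve (X : C) (a : M.obj (op X)) (S : Presieve X) :
    Presieve (CMobj M X a) :=
  Presieve.ofArrows (ι := (U : C) × {u : U ⟶ X // S u})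
    (fun i => CMobj M i.1 ((M.map i.2.1.op).obj a))
    (fun i => CMhom M i.2.1 (𝟙 _))

theorem _root_.CategoryTheory.Grothendieck.exists_comp_eq_of_comp_base_eq
    {D : Type*} [Category D] {G : D ⥤ Grpd}
    {P Q R : Grothendieck (G ⋙ Grpd.forgetToCat)} (g : P ⟶ Q) (h : P ⟶ R)
    (l : R.base ⟶ Q.base) (w : h.base ≫ l = g.base) : ∃ k : R ⟶ Q, h ≫ k = g := by
  refine ⟨⟨l, Groupoid.inv (obj := G.obj Q.base) ((G.map l).map h.fiber) ≫ eqToHom ?_ ≫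
    g.fiber⟩, ?_⟩
  · rw [← w, Functor.map_comp]; rfl
  · apply Grothendieck.ext _ _ w
    simp only [Grothendieck.comp_fiber, eqToHom_trans_assoc]
    erw [Groupoid.inv_eq_inv, IsIso.hom_inv_id_assoc, eqToHom_trans_assoc, eqToHom_refl,
      Category.id_comp]

lemma exists_comp_eq_of_comp_CMforget_map_eq {P Q R : CM M} (g : Q ⟶ P) (h : R ⟶ P)
    (l : (CMforget M).obj Q ⟶ (CMforget M).obj R)
    (w : l ≫ (CMforget M).map h = (CMforget M).map g) : ∃ k : Q ⟶ R, k ≫ h = g :=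
  let ⟨k, hk⟩ :=
    Grothendieck.exists_comp_eq_of_comp_base_eq g.unop h.unop l.op (congrArg Quiver.Hom.op w)
  ⟨k.op, congrArg Quiver.Hom.op hk⟩

lemma underlyingPresieve_specialPresieve (X : C) (a : M.obj (op X)) (S : Presieve X) :
    underlyingPresieve M (specialPresieve M X a S) = S := by
  funext U
  ext u
  constructor
  · rintro ⟨b, f, ⟨i⟩, rfl⟩
    exact i.2.2
  · intro hu
    exact ⟨_, _, Presieve.ofArrows.mk (⟨U, u, hu⟩ : (V : C) × {u : V ⟶ X // S u}), rfl⟩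

lemma specialPresieve_underlyingPresieve_le {X : C} {a : M.obj (op X)}
    (R : Presieve (CMobj M X a)) :
    specialPresieve M X a (underlyingPresieve M R) ≤ (Sieve.generate R).arrows := by
  rintro Q g ⟨⟨U, u, b, f, hf, rfl⟩⟩
  obtain ⟨k, hk⟩ := exists_comp_eq_of_comp_CMforget_map_eq M
    (CMhom M ((CMforget M).map f) (𝟙 _)) f (𝟙 U) (Category.id_comp _)
  exact ⟨_, k, f, hf, hk⟩

variable [HasPullbacks C] (K : Pretopology C)

lemma generate_specialPresieve_mem_cmTopology {X : C} (a : M.obj (op X)) {S : Presieve X}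
    (hS : S ∈ K.coverings X) :
    Sieve.generate (specialPresieve M X a S) ∈ cmTopology M K (CMobj M X a) :=
  (GrothendieckTopology.mem_sInf _ _).2 fun _ hJ => hJ _ _ <| by
    rwa [Set.mem_ofPred_eq, underlyingPresieve_specialPresieve]

def specialCoverage : Coverage (CM M) where
  coverings P :=
    {R | ∃ S ∈ K.coverings P.unop.base.unop, R = specialPresieve M _ P.unop.fiber S}
  pullback := by
    rintro P Q f _ ⟨S, hS, rfl⟩
    refine ⟨_, ⟨_, K.pullbacks ((CMforget M).map f) S hS, rfl⟩, ?_⟩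
    rintro _ _ ⟨⟨Z, _, ⟨V, v, hv⟩⟩⟩
    obtain ⟨k, hk⟩ := exists_comp_eq_of_comp_CMforget_map_eq M (CMhom M _ (𝟙 _) ≫ f)
      (CMhom M v (𝟙 _)) (pullback.fst v ((CMforget M).map f)) pullback.condition
    exact ⟨_, k, _, Presieve.ofArrows.mk (⟨_, v, hv⟩ : (V : C) × {u : V ⟶ _ // S u}), hk⟩

theorem cmTopology_eq_toGrothendieck_specialCoverage :
    cmTopology M K = (specialCoverage M K).toGrothendieck := by
  apply le_antisymm
  · refine sInf_le fun ⟨⟨⟨X⟩, a⟩⟩ R hR => ?_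
    exact (specialCoverage M K).mem_toGrothendieck_sieves_of_superset
      (specialPresieve_underlyingPresieve_le M R) ⟨_, hR, rfl⟩
  · refine ((Coverage.gi _).gc _ _).2 fun ⟨⟨⟨X⟩, a⟩⟩ R ⟨S, hS, hR⟩ => ?_
    subst hR
    exact generate_specialPresieve_mem_cmTopology M K a hS

end Hollander

open Hollander in
/-- A presheaf of sets `F` on `C/M` is a sheaf for the
topology generated by the pretopology whose covers are the families forgetting
to covers in `C` if and only if `F` satisfies the sheaf condition with respect
to every presieve of the special form
`{(u_i, id) : (U_i, M(u_i)(a)) → (X, a)}` with `{u_i : U_i → X}` a cover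
in `C` and `a` an object of `M(X)`. -/
theorem stmt2 {C : Type u} [SmallCategory C] [HasPullbacks C] (K : Pretopology C)
    (M : Cᵒᵖ ⥤ Grpd.{u, u}) (F : (CM M)ᵒᵖ ⥤ Type u) :
    Presieve.IsSheaf (cmTopology M K) F ↔
      ∀ (X : C) (a : M.obj (op X)) (S : Presieve X), S ∈ K.coverings X →
        Presieve.IsSheafFor F (specialPresieve M X a S) := by
  rw [cmTopology_eq_toGrothendieck_specialCoverage, Presieve.isSheaf_coverage]
  constructor
  · exact fun h X a S hS => h _ ⟨S, hS, rfl⟩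
  · rintro h P _ ⟨S, hS, rfl⟩
    exact h _ _ S hS
end
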